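/- If S[i..j] is a palindrome and S[i..j] occurs exactly once in S, then either j-i+1 ≤ 2, or S[i+1..j-1] is a palindrome; moreover, if additionally S[i+1..j-1] occurs exactly once in S, then S[i..j] is not a MUPS but S[i+1..j-1] is still a unique palindromic substring, so by induction every unique palindromic substring of S contains a MUPS of S with the same center. -/

import Mathlib

/-- `sub S i j` is the substring `S[i..j]`, 1-indexed and inclusive. -/
def sub (S : List Char) (i j : ℕ) : List Char := (S.drop (i-1)).take (j+1-i)

/-- A string is a palindrome if it equals its reversal. -/
def isPal (w : List Char) : Prop := w.reverse = w

/-- The set of (1-indexed) occurrence positions of `w` in `S`. -/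
def occs (S w : List Char) : Finset ℕ :=
  (Finset.Icc 1 S.length).filter (fun p => sub S p (p + w.length - 1) = w)

/-- `w` occurs exactly once in `S`. -/
def uniqueIn (S w : List Char) : Prop := (occs S w).card = 1

/-- `[i,j]` is (the interval of) a unique palindromic substring of `S`. -/
def UPS (S : List Char) (i j : ℕ) : Prop :=
  1 ≤ i ∧ i ≤ j ∧ j ≤ S.length ∧ isPal (sub S i j) ∧ uniqueIn S (sub S i j)

/-- `[i,j]` is a minimal unique palindromic substring of `S`. -/
def MUPS (S : List Char) (i j : ℕ) : Prop :=
  UPS S i j ∧ (j + 1 - i ≤ 2 ∨ 2 ≤ (occs S (sub S (i+1) (j-1))).card)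

/-- `[i,j]` is a shortest unique palindromic substring of `S` for the query `[s,t]`. -/
def SUPS (S : List Char) (s t i j : ℕ) : Prop :=
  UPS S i j ∧ i ≤ s ∧ s ≤ t ∧ t ≤ j ∧
    ∀ i' j', UPS S i' j' → i' ≤ s → t ≤ j' → j - i ≤ j' - i'

theorem isPal.tail_dropLast {w : List Char} (h : isPal w) : isPal w.tail.dropLast := by
  unfold isPal at *
  rw [← List.tail_reverse, ← List.dropLast_reverse, h, List.tail_dropLast]

theorem length_sub {S : List Char} {i j : ℕ} (hi : 1 ≤ i) (hj : j ≤ S.length) :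
    (sub S i j).length = j + 1 - i := by
  simp only [sub, List.length_take, List.length_drop]
  omega

theorem sub_succ_pred {S : List Char} {i j : ℕ} (hi : 1 ≤ i) (hj : j ≤ S.length) :
    sub S (i + 1) (j - 1) = (sub S i j).tail.dropLast := by
  rw [List.dropLast_eq_take, List.length_tail, length_sub hi hj, ← List.drop_one, sub, sub,
    List.drop_take, List.take_take, List.drop_drop]
  congr 2 <;> omega

theorem mem_occs_sub {S : List Char} {i j : ℕ} (hi : 1 ≤ i) (hij : i ≤ j) (hj : j ≤ S.length) :
    i ∈ occs S (sub S i j) := by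
  rw [occs, Finset.mem_filter, Finset.mem_Icc, length_sub hi hj]
  exact ⟨⟨hi, by omega⟩, by congr 1; omega⟩

namespace UPS

variable {S : List Char} {i j : ℕ}

theorem isPal_inner (h : UPS S i j) : isPal (sub S (i + 1) (j - 1)) := by
  obtain ⟨hi, -, hj, hpal, -⟩ := h
  rw [sub_succ_pred hi hj]
  exact hpal.tail_dropLast

theorem card_occs_inner_pos (h : UPS S i j) (hlen : 2 < j + 1 - i) :
    0 < (occs S (sub S (i + 1) (j - 1))).card :=
  Finset.card_pos.mpr ⟨i + 1, mem_occs_sub (by omega) (by omega) (by have := h.2.2.1; omega)⟩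

theorem inner (h : UPS S i j) (hlen : 2 < j + 1 - i) (hu : uniqueIn S (sub S (i + 1) (j - 1))) :
    UPS S (i + 1) (j - 1) :=
  ⟨by omega, by omega, by have := h.2.2.1; omega, h.isPal_inner, hu⟩

theorem not_MUPS_of_uniqueIn_inner (hlen : 2 < j + 1 - i)
    (hu : uniqueIn S (sub S (i + 1) (j - 1))) : ¬ MUPS S i j := by
  rintro ⟨-, hshort | hcard⟩
  · omega
  · rw [uniqueIn] at hu
    omega

/-- Peeling off the outer characters while the inner palindrome stays unique reaches a MUPS. -/
theorem exists_MUPS_same_center {i j : ℕ} (h : UPS S i j) :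
    ∃ k, 2 * k ≤ j - i ∧ MUPS S (i + k) (j - k) := by
  by_cases hmin : j + 1 - i ≤ 2 ∨ 2 ≤ (occs S (sub S (i + 1) (j - 1))).card
  · exact ⟨0, by omega, h, hmin⟩
  push Not at hmin
  have hu : uniqueIn S (sub S (i + 1) (j - 1)) := by
    have := h.card_occs_inner_pos hmin.1
    rw [uniqueIn]
    omega
  obtain ⟨k, hk, hmups⟩ := exists_MUPS_same_center (h.inner hmin.1 hu)
  refine ⟨k + 1, by omega, ?_⟩
  rwa [show i + (k + 1) = i + 1 + k by omega, show j - (k + 1) = j - 1 - k by omega]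
termination_by j - i
decreasing_by omega

end UPS

theorem stmt18 (S : List Char) :
    (∀ i j, UPS S i j → (j + 1 - i ≤ 2 ∨ isPal (sub S (i+1) (j-1)))) ∧
    (∀ i j, UPS S i j → 2 < j + 1 - i → uniqueIn S (sub S (i+1) (j-1)) →
      ¬ MUPS S i j ∧ UPS S (i+1) (j-1)) ∧
    (∀ i j, UPS S i j → ∃ k, 2 * k ≤ j - i ∧ MUPS S (i + k) (j - k)) := by
  exact ⟨fun i j h => Or.inr h.isPal_inner,
    fun i j h hlen hu => ⟨UPS.not_MUPS_of_uniqueIn_inner hlen hu, h.inner hlen hu⟩,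
    fun i j h => h.exists_MUPS_same_center⟩
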